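/- (Generalized pseudo-additivity) For any bipartite density matrix ρ_AB on C^{d_A} ⊗ C^{d_B} with marginals ρ_A, ρ_B, and S_L(ρ) := 1 − Tr(ρ²), one has 1 − (d_A d_B / 4)(1 − S_L(ρ_AB) + 1/(d_A d_B))² ≤ S_L(ρ_A) + S_L(ρ_B) − S_L(ρ_A) S_L(ρ_B). -/

import Mathlib

open Matrix BigOperators Kronecker ComplexOrder

noncomputable def purity {n : Type*} [Fintype n] (ρ : Matrix n n ℂ) : ℝ :=
  ((ρ * ρ).trace).re

def IsDensity {n : Type*} [Fintype n] (ρ : Matrix n n ℂ) : Prop :=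
  ρ.PosSemidef ∧ ρ.trace = 1

noncomputable def ptraceB {m p : Type*} [Fintype p] (ρ : Matrix (m × p) (m × p) ℂ) :
    Matrix m m ℂ :=
  Matrix.of fun i j => ∑ k, ρ (i, k) (j, k)

noncomputable def ptraceA {m p : Type*} [Fintype m] (ρ : Matrix (m × p) (m × p) ℂ) :
    Matrix p p ℂ :=
  Matrix.of fun i j => ∑ k, ρ (k, i) (k, j)

noncomputable def ptraceMid {a b c : Type*} [Fintype b]
    (ρ : Matrix (a × b × c) (a × b × c) ℂ) : Matrix (a × c) (a × c) ℂ :=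
  Matrix.of fun i j => ∑ k, ρ (i.1, k, i.2) (j.1, k, j.2)

noncomputable def linEnt {n : Type*} [Fintype n] (ρ : Matrix n n ℂ) : ℝ := 1 - purity ρ

/-!
The matrix `M = ρ - ρ_A ⊗ 1 / d_B - 1 ⊗ ρ_B / d_A + 1 / (d_A d_B)` is Hermitian, so
`0 ≤ Tr M² = Tr ρ² - Tr ρ_A² / d_B - Tr ρ_B² / d_A + 1 / (d_A d_B)`.
By AM-GM, `4 Tr ρ_A² Tr ρ_B² / (d_A d_B) ≤ (Tr ρ_A² / d_B + Tr ρ_B² / d_A)²`, so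
`Tr ρ_A² Tr ρ_B² ≤ (d_A d_B / 4) (Tr ρ² + 1 / (d_A d_B))²`, and the right-hand side of the
claim is `1 - Tr ρ_A² Tr ρ_B²`.
-/

namespace Matrix

variable {m p : Type*}

theorem trace_ptraceB [Fintype m] [Fintype p] (ρ : Matrix (m × p) (m × p) ℂ) :
    (ptraceB ρ).trace = ρ.trace := by
  simp [trace, ptraceB, Fintype.sum_prod_type]

theorem trace_ptraceA [Fintype m] [Fintype p] (ρ : Matrix (m × p) (m × p) ℂ) :
    (ptraceA ρ).trace = ρ.trace := by
  simp only [trace, diag, ptraceA, of_apply, Fintype.sum_prod_type]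
  exact Finset.sum_comm

theorem IsHermitian.ptraceB [Fintype p] {ρ : Matrix (m × p) (m × p) ℂ} (hρ : ρ.IsHermitian) :
    (ptraceB ρ).IsHermitian := by
  ext i j
  simp only [conjTranspose_apply, _root_.ptraceB, of_apply, star_sum]
  exact Finset.sum_congr rfl fun k _ => hρ.apply _ _

theorem IsHermitian.ptraceA [Fintype m] {ρ : Matrix (m × p) (m × p) ℂ} (hρ : ρ.IsHermitian) :
    (ptraceA ρ).IsHermitian := by
  ext i j
  simp only [conjTranspose_apply, _root_.ptraceA, of_apply, star_sum]
  exact Finset.sum_congr rfl fun k _ => hρ.apply _ _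

theorem trace_mul_kronecker_one [Fintype m] [Fintype p] [DecidableEq p]
    (ρ : Matrix (m × p) (m × p) ℂ) (C : Matrix m m ℂ) :
    (ρ * (C ⊗ₖ (1 : Matrix p p ℂ))).trace = (ptraceB ρ * C).trace := by
  simp only [trace, diag, mul_apply, kroneckerMap_apply, one_apply, ptraceB, of_apply,
    Fintype.sum_prod_type, mul_ite, mul_one, mul_zero, Finset.sum_ite_eq', Finset.mem_univ,
    if_true, Finset.sum_mul]
  exact Finset.sum_congr rfl fun i _ => Finset.sum_comm

theorem trace_mul_one_kronecker [Fintype m] [Fintype p] [DecidableEq m]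
    (ρ : Matrix (m × p) (m × p) ℂ) (C : Matrix p p ℂ) :
    (ρ * ((1 : Matrix m m ℂ) ⊗ₖ C)).trace = (ptraceA ρ * C).trace := by
  simp only [trace, diag, mul_apply, kroneckerMap_apply, one_apply, ptraceA, of_apply,
    Fintype.sum_prod_type, ite_mul, one_mul, zero_mul, mul_ite, mul_zero, Finset.sum_mul,
    Finset.sum_ite_irrel, Finset.sum_const_zero, Finset.sum_ite_eq', Finset.mem_univ, if_true]
  rw [Finset.sum_comm]
  exact Finset.sum_congr rfl fun k _ => Finset.sum_comm

theorem purity_nonneg {n : Type*} [Fintype n] {M : Matrix n n ℂ} (hM : M.IsHermitian) :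
    0 ≤ purity M := by
  have h := (posSemidef_self_mul_conjTranspose M).trace_nonneg
  rw [hM.eq] at h
  exact (Complex.nonneg_iff.1 h).1

end Matrix

section Bitraceless

variable {m p : Type*} [Fintype m] [Fintype p] [DecidableEq m] [DecidableEq p]

/-- For `ρ` of trace one, the Hilbert–Schmidt orthogonal projection of `ρ` onto the span of
the products `X ⊗ₖ Y` of traceless `X` and `Y`. -/
noncomputable def bitracelessPart (ρ : Matrix (m × p) (m × p) ℂ) : Matrix (m × p) (m × p) ℂ :=
  ρ - (Fintype.card p : ℂ)⁻¹ • (ptraceB ρ ⊗ₖ 1) - (Fintype.card m : ℂ)⁻¹ • (1 ⊗ₖ ptraceA ρ)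
    + ((Fintype.card m : ℂ) * Fintype.card p)⁻¹ • 1

theorem Matrix.IsHermitian.bitracelessPart {ρ : Matrix (m × p) (m × p) ℂ} (hρ : ρ.IsHermitian) :
    (bitracelessPart ρ).IsHermitian := by
  simp only [IsHermitian, _root_.bitracelessPart, conjTranspose_add, conjTranspose_sub,
    conjTranspose_smul, conjTranspose_kronecker, conjTranspose_one, hρ.eq, hρ.ptraceA.eq,
    hρ.ptraceB.eq, star_inv₀, star_mul', star_natCast]

theorem trace_bitracelessPart_sq [Nonempty m] [Nonempty p] {ρ : Matrix (m × p) (m × p) ℂ}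
    (htr : ρ.trace = 1) :
    (bitracelessPart ρ * bitracelessPart ρ).trace = (ρ * ρ).trace
      - (ptraceB ρ * ptraceB ρ).trace / Fintype.card p
      - (ptraceA ρ * ptraceA ρ).trace / Fintype.card m
      + 1 / ((Fintype.card m : ℂ) * Fintype.card p) := by
  have hm : (Fintype.card m : ℂ) ≠ 0 := by simp
  have hp : (Fintype.card p : ℂ) ≠ 0 := by simp
  have hA : (ptraceB ρ).trace = 1 := (trace_ptraceB ρ).trans htr
  have hB : (ptraceA ρ).trace = 1 := (trace_ptraceA ρ).trans htr
  simp only [bitracelessPart, sub_mul, mul_sub, add_mul, mul_add, Matrix.smul_mul,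
    Matrix.mul_smul, one_mul, mul_one, smul_smul, trace_add, trace_sub, trace_smul, ← mul_kronecker_mul, trace_kronecker,
    trace_one, trace_mul_kronecker_one, trace_mul_one_kronecker, hA, hB, htr,
    Fintype.card_prod, smul_eq_mul, trace_mul_comm (ptraceB ρ ⊗ₖ 1) ρ,
    trace_mul_comm (1 ⊗ₖ ptraceA ρ) ρ]
  push_cast
  field_simp
  ring

theorem purity_ptraceB_div_add_purity_ptraceA_div_le [Nonempty m] [Nonempty p]
    {ρ : Matrix (m × p) (m × p) ℂ} (hρ : ρ.IsHermitian) (htr : ρ.trace = 1) :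
    purity (ptraceB ρ) / Fintype.card p + purity (ptraceA ρ) / Fintype.card m ≤
      purity ρ + 1 / ((Fintype.card m : ℝ) * Fintype.card p) := by
  have h := purity_nonneg hρ.bitracelessPart
  rw [purity, trace_bitracelessPart_sq htr, ← Nat.cast_mul] at h
  simp only [Complex.add_re, Complex.sub_re, Complex.div_natCast_re, Complex.one_re] at h
  push_cast at h
  simp only [purity]
  linarith

end Bitraceless

theorem mul_le_of_div_add_div_le {a b x y s : ℝ} (ha : 0 < a) (hb : 0 < b) (hx : 0 ≤ x)
    (hy : 0 ≤ y) (h : x / b + y / a ≤ s) : x * y ≤ a * b / 4 * s ^ 2 :=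
  calc x * y = a * b / 4 * (4 * (x / b) * (y / a)) := by field_simp
    _ ≤ a * b / 4 * (x / b + y / a) ^ 2 := by gcongr; exact four_mul_le_sq_add _ _
    _ ≤ a * b / 4 * s ^ 2 := by gcongr

theorem generalized_pseudo_additivity
    (dA dB : ℕ) (hdA : 0 < dA) (hdB : 0 < dB)
    (ρ : Matrix (Fin dA × Fin dB) (Fin dA × Fin dB) ℂ) (hρ : IsDensity ρ) :
    1 - ((dA : ℝ) * dB / 4) * (1 - linEnt ρ + 1 / ((dA : ℝ) * dB)) ^ 2 ≤
      linEnt (ptraceB ρ) + linEnt (ptraceA ρ)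
        - linEnt (ptraceB ρ) * linEnt (ptraceA ρ) := by
  have : Nonempty (Fin dA) := Fin.pos_iff_nonempty.1 hdA
  have : Nonempty (Fin dB) := Fin.pos_iff_nonempty.1 hdB
  have hρH : ρ.IsHermitian := hρ.1.isHermitian
  have hmarg := purity_ptraceB_div_add_purity_ptraceA_div_le hρH hρ.2
  simp only [Fintype.card_fin] at hmarg
  have hprod := mul_le_of_div_add_div_le (by positivity) (by positivity)
    (purity_nonneg hρH.ptraceB) (purity_nonneg hρH.ptraceA) hmarg
  simp only [linEnt, sub_sub_cancel]
  linarith
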